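/- For all nonnegative integers m, n, k the binomial coefficients satisfy the identity ∑_{l=0}^{k} C(n+1, k-l) C(m+1, l) (2l - k) = (m - n) C(m+n+1, k-1), where C(a,b) denotes the binomial coefficient and C(a,-1) = 0. -/

import Mathlib

/-!
Since `l + (k - l) = k`, the weight `2l - k` splits as `l - (k - l)`. By absorption,
`l * C(m+1, l) = (m+1) * C(m, l-1)`, so Vandermonde's convolution sums the first half to
`(m+1) * C(m+n+1, k-1)`; symmetrically the second half is `(n+1) * C(m+n+1, k-1)`.
-/

open Finset

theorem sum_antidiagonal_fst_mul_choose_mul_choose (a b k : ℕ) :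
    ∑ p ∈ antidiagonal (k + 1), p.1 * (a + 1).choose p.1 * b.choose p.2
      = (a + 1) * (a + b).choose k := by
  rw [Nat.sum_antidiagonal_succ, zero_mul, zero_mul, zero_add, Nat.add_choose_eq, mul_sum]
  refine sum_congr rfl fun p _ => ?_
  rw [← mul_assoc, Nat.add_one_mul_choose_eq, mul_comm (p.1 + 1)]

theorem sum_antidiagonal_snd_mul_choose_mul_choose (a b k : ℕ) :
    ∑ p ∈ antidiagonal (k + 1), p.2 * a.choose p.1 * (b + 1).choose p.2
      = (b + 1) * (a + b).choose k := by
  rw [← Nat.sum_antidiagonal_swap, add_comm a b, ← sum_antidiagonal_fst_mul_choose_mul_choose]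
  refine sum_congr rfl fun p _ => ?_
  rw [Prod.fst_swap, Prod.snd_swap, mul_right_comm]

/-- Binomial coefficient identity:
`∑_{l=0}^{k} C(n+1, k-l) C(m+1, l) (2l - k) = (m - n) C(m+n+1, k-1)`,
with the convention `C(a, -1) = 0` (relevant for `k = 0`). -/
theorem binom_identity (m n k : ℕ) :
    (∑ l ∈ Finset.range (k + 1),
        ((n + 1).choose (k - l) : ℤ) * ((m + 1).choose l : ℤ) * (2 * (l : ℤ) - (k : ℤ)))
      = ((m : ℤ) - (n : ℤ)) *
          (if k = 0 then 0 else ((m + n + 1).choose (k - 1) : ℤ)) := by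
  rcases k with _ | k
  · simp
  have hsplit : ∀ p ∈ antidiagonal (k + 1),
      ((n + 1).choose p.2 * (m + 1).choose p.1 * (2 * p.1 - (k + 1 : ℕ)) : ℤ)
        = (p.1 * (m + 1).choose p.1 * (n + 1).choose p.2 : ℕ)
          - (p.2 * (m + 1).choose p.1 * (n + 1).choose p.2 : ℕ) := by
    intro p hp
    rw [← mem_antidiagonal.mp hp]
    push_cast
    ring
  rw [← Nat.sum_antidiagonal_eq_sum_range_succ (fun i j =>
      ((n + 1).choose j * (m + 1).choose i * (2 * i - (k + 1 : ℕ)) : ℤ)),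
    sum_congr rfl hsplit, sum_sub_distrib, ← Nat.cast_sum, ← Nat.cast_sum,
    sum_antidiagonal_fst_mul_choose_mul_choose, sum_antidiagonal_snd_mul_choose_mul_choose,
    ← add_assoc, add_right_comm m 1 n]
  push_cast
  ring
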